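/- arXiv:2005.12997 — 7 statements merged into one kernel-verified Lean document; each statement's English description precedes it below -/
import Mathlib

section
/- Let k ≥ 2 be an integer and w a real number with 0 < w ≤ 1/k. Then there exists a unique ε > 0 such that ∫_0^{1+ε} exp(-w v^k) dv = 1, and this ε satisfies ε < 2w/k; i.e., the dominant singularity ρ̃ = 1 + ε of the perturbed generating function satisfies 1 < ρ̃ < 1 + 2w/k. -/
/-!
The primitive `z ↦ ∫₀^z exp (-w v^k) dv` is continuous and strictly increasing, below `1` at
`z = 1` and above `1` at `z = 1 + 2w/k`; the intermediate value theorem does the rest. For the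
upper point, the integrand is at least `1 - w v^k` on `[0, 1]`, which loses only `w/(k+1)`, and
at least `1/2` on `[1, 1 + 2w/k]` because `(1 + 2w/k)^k ≤ e^{2w}`, which gains `w/k`. For `k = 2`
this is too crude, and one integrates `exp (-x) ≥ (1 - x/2)^2` over `[0, 1 + w]` instead.
-/
open Real Set intervalIntegral

section
variable (k : ℕ) (w : ℝ)

lemma continuous_exp_neg_mul_pow : Continuous fun v : ℝ => exp (-w * v ^ k) := by fun_prop

lemma continuous_integral_exp_neg_mul_pow :
    Continuous fun z : ℝ => ∫ v in (0:ℝ)..z, exp (-w * v ^ k) :=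
  continuous_primitive (continuous_exp_neg_mul_pow k w).intervalIntegrable 0

lemma strictMono_integral_exp_neg_mul_pow :
    StrictMono fun z : ℝ => ∫ v in (0:ℝ)..z, exp (-w * v ^ k) := by
  intro a b hab
  have hint := (continuous_exp_neg_mul_pow k w).intervalIntegrable (μ := MeasureTheory.volume)
  simp only
  rw [← integral_add_adjacent_intervals (hint 0 a) (hint a b)]
  exact lt_add_of_pos_right _ (intervalIntegral_pos_of_pos (hint a b) (fun _ => exp_pos _) hab)

lemma integral_exp_neg_mul_pow_lt_one (hw : 0 < w) :
    ∫ v in (0:ℝ)..1, exp (-w * v ^ k) < 1 :=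
  calc ∫ v in (0:ℝ)..1, exp (-w * v ^ k)
      < ∫ _ in (0:ℝ)..1, (1:ℝ) :=
        integral_lt_integral_of_continuousOn_of_le_of_exists_lt one_pos
          (continuous_exp_neg_mul_pow k w).continuousOn continuousOn_const
          (fun v hv => exp_le_one_iff.2 <| by nlinarith [pow_nonneg hv.1.le k])
          ⟨1, by simp, by simpa using hw⟩
    _ = 1 := by simp

lemma one_sub_div_le_integral_exp_neg_mul_pow :
    1 - w / (k + 1) ≤ ∫ v in (0:ℝ)..1, exp (-w * v ^ k) :=
  calc 1 - w / (k + 1) = ∫ v in (0:ℝ)..1, (1 - w * v ^ k) := by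
        rw [integral_sub intervalIntegrable_const
          ((by fun_prop : Continuous _).intervalIntegrable _ _),
          intervalIntegral.integral_const_mul, integral_pow]
        simp [div_eq_mul_inv]
    _ ≤ ∫ v in (0:ℝ)..1, exp (-w * v ^ k) :=
        integral_mono_on zero_le_one ((by fun_prop : Continuous _).intervalIntegrable _ _)
          ((continuous_exp_neg_mul_pow k w).intervalIntegrable 0 1)
          fun v _ => by linarith [add_one_le_exp (-w * v ^ k)]

lemma sub_mul_exp_le_integral_exp_neg_mul_pow (hw : 0 ≤ w) {a b : ℝ} (ha : 0 ≤ a) (hab : a ≤ b) :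
    (b - a) * exp (-w * b ^ k) ≤ ∫ v in a..b, exp (-w * v ^ k) :=
  calc (b - a) * exp (-w * b ^ k) = ∫ _ in a..b, exp (-w * b ^ k) := by simp
    _ ≤ ∫ v in a..b, exp (-w * v ^ k) :=
        integral_mono_on hab intervalIntegrable_const
          ((continuous_exp_neg_mul_pow k w).intervalIntegrable a b)
          fun v hv => exp_le_exp.2 <| by
            nlinarith [pow_le_pow_left₀ (ha.trans hv.1) hv.2 k]

end

lemma one_lt_integral_exp_neg_mul_pow_of_three_le {k : ℕ} (hk : 3 ≤ k) {w : ℝ} (hw : 0 < w)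
    (hwk : w ≤ 1 / k) : 1 < ∫ v in (0:ℝ)..(1 + 2 * w / k), exp (-w * v ^ k) := by
  set δ := 2 * w / k with hδ
  have hk₀ : (0:ℝ) < k := by positivity
  have hw₃ : w ≤ 1 / 3 := hwk.trans (by gcongr; exact_mod_cast hk)
  have hpow : (1 + δ) ^ k ≤ exp (2 * w) := by
    simpa [δ, neg_div] using one_sub_div_pow_le_exp_neg (n := k) (t := -(2 * w)) (by linarith)
  have hhalf : 1 / 2 < exp (-w * (1 + δ) ^ k) := by
    have he : exp (2 / 3) < 2 := (lt_log_iff_exp_lt two_pos).1 (by linarith [log_two_gt_d9])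
    have : w * (1 + δ) ^ k < log 2 := by
      calc w * (1 + δ) ^ k ≤ 1 / 3 * exp (2 / 3) := by
            gcongr; exact hpow.trans (exp_le_exp.2 (by linarith))
        _ < 2 / 3 := by linarith
        _ < log 2 := by linarith [log_two_gt_d9]
    refine (log_lt_iff_lt_exp (by norm_num)).1 ?_
    rw [one_div, log_inv]
    linarith
  have hint := (continuous_exp_neg_mul_pow k w).intervalIntegrable (μ := MeasureTheory.volume)
  rw [← integral_add_adjacent_intervals (hint 0 1) (hint 1 (1 + δ))]
  have hhead := one_sub_div_le_integral_exp_neg_mul_pow k w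
  have hδ₀ : 0 < δ := by positivity
  have htail := sub_mul_exp_le_integral_exp_neg_mul_pow k w hw.le zero_le_one
    (le_add_of_nonneg_right hδ₀.le)
  rw [add_sub_cancel_left] at htail
  have hdiv : w / (k + 1) < δ / 2 := by
    rw [hδ]; field_simp; linarith
  linarith [mul_lt_mul_of_pos_left hhalf hδ₀]

lemma one_lt_integral_exp_neg_mul_sq {w : ℝ} (hw : 0 < w) (hw₂ : w ≤ 1 / 2) :
    1 < ∫ v in (0:ℝ)..(1 + w), exp (-w * v ^ 2) :=
  calc 1 < (1 + w) - w * (1 + w) ^ 3 / 3 + w ^ 2 * (1 + w) ^ 5 / 20 := by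
        nlinarith [pow_pos hw 3, pow_pos hw 4, pow_pos hw 5, pow_pos hw 6, mul_pos hw hw]
    _ = ∫ v in (0:ℝ)..(1 + w), (1 - w * v ^ 2 + w ^ 2 / 4 * v ^ 4) := by
        rw [integral_add, integral_sub, intervalIntegral.integral_const_mul,
          intervalIntegral.integral_const_mul, integral_pow, integral_pow]
        · simp only [integral_const, sub_zero, smul_eq_mul, mul_one, Nat.cast_ofNat]
          ring
        all_goals exact (by fun_prop : Continuous _).intervalIntegrable _ _
    _ ≤ ∫ v in (0:ℝ)..(1 + w), exp (-w * v ^ 2) :=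
        integral_mono_on (by linarith) ((by fun_prop : Continuous _).intervalIntegrable _ _)
          ((continuous_exp_neg_mul_pow 2 w).intervalIntegrable _ _) fun v hv => by
            -- `(1 - x / 2) ^ 2 ≤ exp (-x)` for `x ≤ 2`, and `w v ^ 2 ≤ w (1 + w) ^ 2 ≤ 9 / 8`
            have hv₂ : v ^ 2 ≤ (1 + w) ^ 2 := pow_le_pow_left₀ hv.1 hv.2 2
            have := one_sub_div_pow_le_exp_neg (n := 2) (t := w * v ^ 2) (by push_cast; nlinarith)
            rw [neg_mul]
            convert this using 1
            push_cast; ring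

lemma one_lt_integral_exp_neg_mul_pow {k : ℕ} (hk : 2 ≤ k) {w : ℝ} (hw : 0 < w)
    (hwk : w ≤ 1 / k) : 1 < ∫ v in (0:ℝ)..(1 + 2 * w / k), exp (-w * v ^ k) := by
  rcases hk.eq_or_lt with rfl | hk
  · have hδ : 2 * w / ((2 : ℕ) : ℝ) = w := by push_cast; ring
    rw [hδ]
    exact one_lt_integral_exp_neg_mul_sq hw (by simpa using hwk)
  · exact one_lt_integral_exp_neg_mul_pow_of_three_le hk hw hwk

/-- For an integer `k ≥ 2` and a real `w` with `0 < w ≤ 1/k`, there is a unique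
`ε > 0` with `∫_0^{1+ε} exp(-w v^k) dv = 1`, and this `ε` satisfies `ε < 2w/k`. -/
theorem stmt2 (k : ℕ) (hk : 2 ≤ k) (w : ℝ) (hw : 0 < w) (hwk : w ≤ 1 / k) :
    ∃ ε : ℝ, 0 < ε ∧ (∫ v in (0:ℝ)..(1 + ε), Real.exp (-w * v ^ k)) = 1 ∧ ε < 2 * w / k ∧
      ∀ ε' : ℝ, 0 < ε' → (∫ v in (0:ℝ)..(1 + ε'), Real.exp (-w * v ^ k)) = 1 → ε' = ε := by
  have hδ : 0 < 2 * w / k := by positivity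
  obtain ⟨ρ, ⟨hρ₁, hρδ⟩, hρ⟩ := intermediate_value_Ioo (by linarith)
    (continuous_integral_exp_neg_mul_pow k w).continuousOn
    ⟨integral_exp_neg_mul_pow_lt_one k w hw, one_lt_integral_exp_neg_mul_pow hk hw hwk⟩
  refine ⟨ρ - 1, by linarith, by simpa using hρ, by linarith, fun ε' _ hε' => ?_⟩
  have := (strictMono_integral_exp_neg_mul_pow k w).injective (hε'.trans hρ.symm)
  linarith
end

section
/- For each integer k ≥ 2 let w_k be a real number with 0 < w_k ≤ 1/k, and let ε_k be the unique positive real number with ∫_0^{1+ε_k} exp(-w_k v^k) dv = 1. Then k · ε_k / w_k → 1 as k → ∞; i.e., ρ̃_k = 1 + ε_k ~ 1 + w_k/k. -/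
/-! Write `G z = ∫₀^z exp (-w v^k) dv` (`expPowIntegral k w z`). Integrating
`1 - x ≤ exp (-x) ≤ 1 - x + x²` gives
`z - w z^(k+1)/(k+1) ≤ G z ≤ z - w z^(k+1)/(k+1) + w² z^(2k+1)/(2k+1)`.
Since `G` is increasing and already `G (1 + 1/k) ≥ 1` for `k ≥ 5`, we get `ε ≤ 1/k`, hence
`P = (1+ε)^(k+1) ≤ (1+1/k)^(k+1) ≤ 6` and `(1+ε)^(2k+1) ≤ P² ≤ 36`. Evaluating the two bounds
at `z = 1 + ε`, where `G = 1`, squeezes `(k+1) ε` between `wP - O(w/k)` and `wP`, and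
`1 ≤ P ≤ exp ((k+1) ε) ≤ exp (wP) ≤ exp (6/k)`. -/

open Real Filter intervalIntegral

lemma exp_neg_le_one_sub_add_sq {x : ℝ} (hx : 0 ≤ x) : exp (-x) ≤ 1 - x + x ^ 2 :=
  calc exp (-x) = (exp x)⁻¹ := exp_neg x
    _ ≤ (1 + x)⁻¹ := inv_anti₀ (by positivity) (by linarith [add_one_le_exp x])
    _ ≤ 1 - x + x ^ 2 := by
      rw [inv_le_iff_one_le_mul₀' (by positivity)]
      nlinarith [pow_nonneg hx 3]

lemma one_add_pow_le_exp_mul {a : ℝ} (ha : -1 ≤ a) (n : ℕ) : (1 + a) ^ n ≤ exp (n * a) := by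
  rw [exp_nat_mul]
  gcongr
  · linarith
  · linarith [add_one_le_exp a]

lemma one_add_inv_pow_succ_le_six (k : ℕ) : (1 + (k : ℝ)⁻¹) ^ (k + 1) ≤ 6 := by
  have h2 : 1 + (k : ℝ)⁻¹ ≤ 2 := by linarith [Nat.cast_inv_le_one (α := ℝ) k]
  rw [pow_succ]
  calc (1 + (k : ℝ)⁻¹) ^ k * (1 + (k : ℝ)⁻¹) ≤ 3 * 2 := by
        gcongr
        exact one_add_inv_pow_le_exp.trans exp_one_lt_three.le
    _ = 6 := by norm_num

noncomputable def expPowIntegral (k : ℕ) (w z : ℝ) : ℝ :=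
  ∫ v in (0 : ℝ)..z, exp (-w * v ^ k)

section expPowIntegral

variable (k : ℕ) (w : ℝ)

lemma intervalIntegrable_exp_neg_mul_pow (a b : ℝ) :
    IntervalIntegrable (fun v : ℝ => exp (-w * v ^ k)) MeasureTheory.volume a b :=
  (by fun_prop : Continuous fun v : ℝ => exp (-w * v ^ k)).intervalIntegrable a b

lemma expPowIntegral_strictMono : StrictMono (expPowIntegral k w) := by
  intro a b hab
  have hpos : 0 < ∫ v in a..b, exp (-w * v ^ k) :=
    intervalIntegral_pos_of_pos_on (intervalIntegrable_exp_neg_mul_pow k w a b)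
      (fun _ _ => exp_pos _) hab
  unfold expPowIntegral
  rw [← integral_add_adjacent_intervals (intervalIntegrable_exp_neg_mul_pow k w 0 a)
    (intervalIntegrable_exp_neg_mul_pow k w a b)]
  linarith

lemma sub_le_expPowIntegral {z : ℝ} (hz : 0 ≤ z) :
    z - w * z ^ (k + 1) / (k + 1) ≤ expPowIntegral k w z := by
  have hint : ∫ v in (0 : ℝ)..z, (1 - w * v ^ k) = z - w * z ^ (k + 1) / (k + 1) := by
    rw [integral_sub intervalIntegrable_const (by apply Continuous.intervalIntegrable; fun_prop),
      integral_const_mul, integral_pow]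
    simp only [integral_const, smul_eq_mul]
    ring
  rw [← hint]
  refine integral_mono_on hz (by apply Continuous.intervalIntegrable; fun_prop)
    (intervalIntegrable_exp_neg_mul_pow k w 0 z) fun v _ => ?_
  simpa [neg_mul, sub_eq_neg_add] using add_one_le_exp (-(w * v ^ k))

lemma expPowIntegral_le (hw : 0 ≤ w) {z : ℝ} (hz : 0 ≤ z) :
    expPowIntegral k w z ≤
      z - w * z ^ (k + 1) / (k + 1) + w ^ 2 * z ^ (2 * k + 1) / (2 * k + 1) := by
  have hint : ∫ v in (0 : ℝ)..z, (1 - w * v ^ k + w ^ 2 * v ^ (2 * k)) =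
      z - w * z ^ (k + 1) / (k + 1) + w ^ 2 * z ^ (2 * k + 1) / (2 * k + 1) := by
    rw [integral_add (by apply Continuous.intervalIntegrable; fun_prop)
        (by apply Continuous.intervalIntegrable; fun_prop),
      integral_sub intervalIntegrable_const (by apply Continuous.intervalIntegrable; fun_prop),
      integral_const_mul, integral_const_mul, integral_pow, integral_pow]
    push_cast
    simp only [integral_const, smul_eq_mul]
    ring
  rw [← hint]
  refine integral_mono_on hz (intervalIntegrable_exp_neg_mul_pow k w 0 z)
    (by apply Continuous.intervalIntegrable; fun_prop) fun v hv => ?_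
  have hsq : (w * v ^ k) ^ 2 = w ^ 2 * v ^ (2 * k) := by ring
  rw [neg_mul, ← hsq]
  exact exp_neg_le_one_sub_add_sq (mul_nonneg hw (pow_nonneg hv.1 k))

end expPowIntegral

lemma le_inv_of_expPowIntegral_eq_one {k : ℕ} {w ε : ℝ} (hk : 5 ≤ k) (hw : w ≤ 1 / k)
    (hG : expPowIntegral k w (1 + ε) = 1) : ε ≤ (k : ℝ)⁻¹ := by
  have hk' : (5 : ℝ) ≤ k := by exact_mod_cast hk
  have hsmall : w * (1 + (k : ℝ)⁻¹) ^ (k + 1) / (k + 1) ≤ (k : ℝ)⁻¹ := by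
    rw [div_le_iff₀ (by positivity)]
    calc w * (1 + (k : ℝ)⁻¹) ^ (k + 1) ≤ (k : ℝ)⁻¹ * 6 := by
          gcongr
          · simpa using hw
          · exact one_add_inv_pow_succ_le_six k
      _ ≤ (k : ℝ)⁻¹ * (k + 1) := by gcongr; linarith
  have hG' : 1 ≤ expPowIntegral k w (1 + (k : ℝ)⁻¹) := by
    linarith [sub_le_expPowIntegral k w (z := 1 + (k : ℝ)⁻¹) (by positivity)]
  rw [← hG, (expPowIntegral_strictMono k w).le_iff_le] at hG'
  linarith

lemma one_add_pow_succ_le_six {k : ℕ} {ε : ℝ} (hε₀ : 0 ≤ ε) (hε : ε ≤ (k : ℝ)⁻¹) :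
    (1 + ε) ^ (k + 1) ≤ 6 :=
  (pow_le_pow_left₀ (by linarith) (by linarith) _).trans (one_add_inv_pow_succ_le_six k)

lemma succ_mul_le_of_expPowIntegral_eq_one {k : ℕ} {w ε : ℝ} (hε₀ : 0 ≤ ε)
    (hG : expPowIntegral k w (1 + ε) = 1) : (k + 1) * ε ≤ w * (1 + ε) ^ (k + 1) := by
  have h := sub_le_expPowIntegral k w (z := 1 + ε) (by linarith)
  rw [hG] at h
  have : ε ≤ w * (1 + ε) ^ (k + 1) / (k + 1) := by linarith
  rwa [le_div_iff₀ (by positivity), mul_comm] at this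

lemma mul_div_le_exp_of_expPowIntegral_eq_one {k : ℕ} {w ε : ℝ} (hk : 5 ≤ k) (hw₀ : 0 < w)
    (hw : w ≤ 1 / k) (hε₀ : 0 ≤ ε) (hG : expPowIntegral k w (1 + ε) = 1) :
    k * ε / w ≤ exp (6 / k) := by
  have hsucc := succ_mul_le_of_expPowIntegral_eq_one hε₀ hG
  have hP := one_add_pow_succ_le_six hε₀ (le_inv_of_expPowIntegral_eq_one hk hw hG)
  have hwP : w * (1 + ε) ^ (k + 1) ≤ 6 / k := by
    calc w * (1 + ε) ^ (k + 1) ≤ 1 / k * 6 := by gcongr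
      _ = 6 / k := by ring
  have hPexp : (1 + ε) ^ (k + 1) ≤ exp (6 / k) := by
    calc (1 + ε) ^ (k + 1) ≤ exp ((k + 1 : ℕ) * ε) := one_add_pow_le_exp_mul (by linarith) _
      _ ≤ exp (6 / k) := by push_cast; gcongr; linarith
  rw [div_le_iff₀ hw₀]
  calc k * ε ≤ (k + 1) * ε := by linarith
    _ ≤ w * (1 + ε) ^ (k + 1) := hsucc
    _ ≤ exp (6 / k) * w := by rw [mul_comm]; gcongr

lemma one_sub_le_mul_div_of_expPowIntegral_eq_one {k : ℕ} {w ε : ℝ} (hk : 5 ≤ k) (hw₀ : 0 < w)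
    (hw : w ≤ 1 / k) (hε₀ : 0 ≤ ε) (hG : expPowIntegral k w (1 + ε) = 1) :
    1 - 19 / k ≤ k * ε / w := by
  have hk' : (5 : ℝ) ≤ k := by exact_mod_cast hk
  have hup := expPowIntegral_le k w hw₀.le (z := 1 + ε) (by linarith)
  have hP := one_add_pow_succ_le_six hε₀ (le_inv_of_expPowIntegral_eq_one hk hw hG)
  have hP₁ : 1 ≤ (1 + ε) ^ (k + 1) := one_le_pow₀ (by linarith)
  have hQ : (1 + ε) ^ (2 * k + 1) ≤ 36 := by
    calc (1 + ε) ^ (2 * k + 1) ≤ (1 + ε) ^ (2 * (k + 1)) :=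
          pow_le_pow_right₀ (by linarith) (by omega)
      _ = ((1 + ε) ^ (k + 1)) ^ 2 := by ring
      _ ≤ 36 := by nlinarith
  have hlow : w / (k + 1) - w ^ 2 * 36 / (2 * k + 1) ≤ ε := by
    rw [hG] at hup
    have : w / (k + 1) ≤ w * (1 + ε) ^ (k + 1) / (k + 1) := by gcongr; nlinarith
    have : w ^ 2 * (1 + ε) ^ (2 * k + 1) / (2 * k + 1) ≤ w ^ 2 * 36 / (2 * k + 1) := by gcongr
    linarith
  have hkw : k * w ≤ 1 := by rw [le_div_iff₀ (by positivity)] at hw; linarith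
  rw [le_div_iff₀ hw₀]
  have hnum : 1 - 19 / (k : ℝ) ≤ k / (k + 1) - 36 / (2 * k + 1) := by
    have hdiff : k / (k + 1) - 36 / (2 * k + 1) - (1 - 19 / (k : ℝ)) =
        (20 * k + 19) / (k * (k + 1) * (2 * k + 1)) := by
      field_simp
      ring
    linarith [hdiff ▸ (by positivity : (0 : ℝ) ≤ (20 * k + 19) / (k * (k + 1) * (2 * k + 1)))]
  calc (1 - 19 / k) * w ≤ (k / (k + 1) - 36 / (2 * k + 1)) * w := by gcongr
    _ ≤ (k / (k + 1) - 36 * (k * w) / (2 * k + 1)) * w := by gcongr; linarith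
    _ = k * (w / (k + 1) - w ^ 2 * 36 / (2 * k + 1)) := by ring
    _ ≤ k * ε := by gcongr

/-- If for each `k ≥ 2` we have `0 < w k ≤ 1/k` and `ε k` is the (unique) positive
real with `∫_0^{1+ε k} exp(-(w k) v^k) dv = 1`, then `k · ε k / w k → 1` as `k → ∞`. -/
theorem stmt3 (w ε : ℕ → ℝ)
    (hw : ∀ k : ℕ, 2 ≤ k → 0 < w k ∧ w k ≤ 1 / k)
    (hε : ∀ k : ℕ, 2 ≤ k → 0 < ε k ∧
      (∫ v in (0:ℝ)..(1 + ε k), Real.exp (-(w k) * v ^ k)) = 1) :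
    Filter.Tendsto (fun k : ℕ => (k : ℝ) * ε k / w k) Filter.atTop (nhds 1) := by
  have bounds : ∀ᶠ k : ℕ in atTop,
      1 - 19 / (k : ℝ) ≤ k * ε k / w k ∧ k * ε k / w k ≤ exp (6 / k) := by
    filter_upwards [eventually_ge_atTop 5] with k hk
    obtain ⟨hw₀, hwk⟩ := hw k (by omega)
    obtain ⟨hε₀, hG⟩ := hε k (by omega)
    exact ⟨one_sub_le_mul_div_of_expPowIntegral_eq_one hk hw₀ hwk hε₀.le hG,
      mul_div_le_exp_of_expPowIntegral_eq_one hk hw₀ hwk hε₀.le hG⟩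
  refine tendsto_of_tendsto_of_tendsto_of_le_of_le' ?_ ?_ (bounds.mono fun _ h => h.1)
    (bounds.mono fun _ h => h.2)
  · simpa using tendsto_const_nhds.sub (tendsto_const_div_atTop_nhds_zero_nat (19 : ℝ))
  · simpa using (tendsto_const_div_atTop_nhds_zero_nat (6 : ℝ)).rexp
end

section
/- Let k ≥ 1 be an integer, w > 0 a real number, and define R_{k,w}(z) = Σ_{ℓ=1}^∞ (-w)^ℓ · z^{ℓk+1} / ((ℓk+1) · ℓ!) for complex z. Then for every complex z with |z| ≤ 1 + 1/k one has |R_{k,w}(z)| ≤ (1/k) · (exp(w·|z|^k) - 1). -/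
/-! The `ℓ`-th term of the series has norm `(w ‖z‖ᵏ)^ℓ / ℓ! · ‖z‖ / (ℓk + 1)`, and the radius
condition `‖z‖ ≤ (k + 1) / k` gives `‖z‖ / (ℓk + 1) ≤ 1 / k` for every `ℓ ≥ 1`. What remains is
`1 / k` times the exponential series of `w ‖z‖ᵏ` without its constant term. -/

open Nat

theorem Real.hasSum_pow_succ_div_factorial_succ (x : ℝ) :
    HasSum (fun n : ℕ => x ^ (n + 1) / (n + 1)!) (Real.exp x - 1) := by
  have h := NormedSpace.expSeries_div_hasSum_exp (𝔸 := ℝ) x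
  rw [← Real.exp_eq_exp_ℝ, ← hasSum_nat_add_iff' 1] at h
  simpa using h

lemma div_succ_mul_add_one_le_one_div {k : ℕ} (hk : 1 ≤ k) {a : ℝ} (ha : a ≤ 1 + 1 / k)
    (n : ℕ) : a / ((n + 1) * k + 1 : ℕ) ≤ 1 / k := by
  have hk0 : (0 : ℝ) < k := by exact_mod_cast hk
  rw [div_le_div_iff₀ (by positivity) hk0]
  have hka : k * a ≤ k + 1 := by
    calc k * a ≤ k * (1 + 1 / k) := mul_le_mul_of_nonneg_left ha hk0.le
      _ = k + 1 := by field_simp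
  have hkn : (k : ℝ) + 1 ≤ ((n + 1) * k + 1 : ℕ) := by
    push_cast
    nlinarith [(n.cast_nonneg : (0 : ℝ) ≤ n)]
  linarith

lemma norm_tail_term_le {k : ℕ} (hk : 1 ≤ k) {w : ℝ} (hw : 0 ≤ w) {z : ℂ}
    (hz : ‖z‖ ≤ 1 + 1 / k) (n : ℕ) :
    ‖(-w : ℂ) ^ (n + 1) * z ^ ((n + 1) * k + 1) / ((((n + 1) * k + 1 : ℕ) : ℂ) * (n + 1)!)‖
      ≤ 1 / k * ((w * ‖z‖ ^ k) ^ (n + 1) / (n + 1)!) := by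
  have hnorm : ‖(-w : ℂ) ^ (n + 1) * z ^ ((n + 1) * k + 1) /
        ((((n + 1) * k + 1 : ℕ) : ℂ) * (n + 1)!)‖
      = (w * ‖z‖ ^ k) ^ (n + 1) / (n + 1)! * (‖z‖ / ((n + 1) * k + 1 : ℕ)) := by
    simp only [norm_div, norm_mul, norm_pow, norm_neg, Complex.norm_real, Real.norm_of_nonneg hw,
      Complex.norm_natCast]
    rw [mul_pow, ← pow_mul, pow_succ ‖z‖, mul_comm k (n + 1)]
    field_simp
  rw [hnorm, mul_comm (1 / (k : ℝ))]
  exact mul_le_mul_of_nonneg_left (div_succ_mul_add_one_le_one_div hk hz n) (by positivity)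

/-- For `k ≥ 1`, `w > 0` and complex `z` with `|z| ≤ 1 + 1/k`, the tail
`R(z) = Σ_{ℓ≥1} (-w)^ℓ z^(ℓk+1)/((ℓk+1)·ℓ!)` satisfies
`|R(z)| ≤ (1/k)(exp(w |z|^k) - 1)`. -/
theorem stmt4 (k : ℕ) (hk : 1 ≤ k) (w : ℝ) (hw : 0 < w) (z : ℂ)
    (hz : ‖z‖ ≤ 1 + 1 / k) :
    ‖∑' ℓ : ℕ, ((-w : ℂ)) ^ (ℓ + 1) * z ^ ((ℓ + 1) * k + 1) /
        ((((ℓ + 1) * k + 1 : ℕ) : ℂ) * (Nat.factorial (ℓ + 1) : ℂ))‖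
      ≤ (1 / k) * (Real.exp (w * ‖z‖ ^ k) - 1) :=
  tsum_of_norm_bounded ((Real.hasSum_pow_succ_div_factorial_succ _).mul_left _)
    (norm_tail_term_le hk hw.le hz)
end

section
/- Let t be a plane binary tree of size k ≥ 1 and let w(t) = 1/∏_{s fringe subtree of t} |s| denote its weight. Then w(t) ≤ 1/2^{k-2}; equivalently, the product of the sizes of all fringe subtrees of t is at least 2^{k-2}. -/
/-!
A bound of the form `c * 2 ^ k ≤ ∏ |s|` with constant `c` does not survive the induction step for
small subtrees, so we induct on `h k * 2 ^ k ≤ ∏ |s|` with `h k = (k + 2) / (4 * k + 2)`: `h` is `1`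
at the leaf, stays above `1 / 4`, and a node of size `a + b + 1` keeps the bound because
`2 * h (a + b + 1) ≤ (a + b + 1) * h a * h b`.
-/

/-- Plane binary trees: a leaf (empty tree) or an internal node with an ordered pair of
subtrees. -/
inductive PBTree : Type
  | leaf : PBTree
  | node : PBTree → PBTree → PBTree

namespace PBTree

/-- The size of a plane binary tree is its number of internal nodes. -/
def size : PBTree → ℕ
  | leaf => 0
  | node l r => l.size + r.size + 1

/-- The product of the sizes of all fringe subtrees of `t` (subtrees rooted at internal nodes
of `t`, including `t` itself). -/
def subtreeProd : PBTree → ℕ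
  | leaf => 1
  | node l r => (node l r).size * (l.subtreeProd * r.subtreeProd)

end PBTree

-- `2 * h (a + b + 1) ≤ (a + b + 1) * h a * h b`, with denominators cleared
lemma sizeRatio_node_le (a b : ℕ) :
    2 * (a + b + 3) * ((4 * a + 2) * (4 * b + 2)) ≤
      (4 * (a + b) + 6) * (a + b + 1) * ((a + 2) * (b + 2)) := by
  have hab : a * b ≤ (a * b) ^ 2 := Nat.le_self_pow two_ne_zero _
  have ha : a ≤ a ^ 3 := Nat.le_self_pow three_ne_zero _
  have hb : b ≤ b ^ 3 := Nat.le_self_pow three_ne_zero _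
  nlinarith [two_mul_le_add_sq a b]

namespace PBTree

lemma two_pow_size_mul_le (t : PBTree) :
    2 ^ t.size * (t.size + 2) ≤ (4 * t.size + 2) * t.subtreeProd := by
  induction t with
  | leaf => simp [size, subtreeProd]
  | node l r ihl ihr =>
    set a := l.size
    set b := r.size
    set X := l.subtreeProd * r.subtreeProd
    have hchildren : 2 ^ (a + b) * ((a + 2) * (b + 2)) ≤ (4 * a + 2) * (4 * b + 2) * X := by
      calc 2 ^ (a + b) * ((a + 2) * (b + 2)) = (2 ^ a * (a + 2)) * (2 ^ b * (b + 2)) := by ring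
        _ ≤ ((4 * a + 2) * l.subtreeProd) * ((4 * b + 2) * r.subtreeProd) :=
          Nat.mul_le_mul ihl ihr
        _ = (4 * a + 2) * (4 * b + 2) * X := by ring
    have hD : 0 < (4 * a + 2) * (4 * b + 2) := by positivity
    show 2 ^ (a + b + 1) * (a + b + 1 + 2) ≤ (4 * (a + b + 1) + 2) * ((a + b + 1) * X)
    refine Nat.le_of_mul_le_mul_left ?_ hD
    calc (4 * a + 2) * (4 * b + 2) * (2 ^ (a + b + 1) * (a + b + 1 + 2))
        = 2 ^ (a + b) * (2 * (a + b + 3) * ((4 * a + 2) * (4 * b + 2))) := by ring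
      _ ≤ 2 ^ (a + b) * ((4 * (a + b) + 6) * (a + b + 1) * ((a + 2) * (b + 2))) :=
        Nat.mul_le_mul_left _ (sizeRatio_node_le a b)
      _ = (4 * (a + b) + 6) * (a + b + 1) * (2 ^ (a + b) * ((a + 2) * (b + 2))) := by ring
      _ ≤ (4 * (a + b) + 6) * (a + b + 1) * ((4 * a + 2) * (4 * b + 2) * X) :=
        Nat.mul_le_mul_left _ hchildren
      _ = (4 * a + 2) * (4 * b + 2) * ((4 * (a + b + 1) + 2) * ((a + b + 1) * X)) := by ring

lemma two_pow_size_le_four_mul_subtreeProd (t : PBTree) : 2 ^ t.size ≤ 4 * t.subtreeProd := by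
  have h := t.two_pow_size_mul_le
  have hk : 0 < 4 * t.size + 2 := by positivity
  refine Nat.le_of_mul_le_mul_left ?_ hk
  nlinarith [Nat.zero_le (2 ^ t.size)]

end PBTree

theorem stmt7_general (t : PBTree) (k : ℕ) (ht : t.size = k) :
    (1 : ℝ) / (t.subtreeProd : ℝ) ≤ 1 / (2 : ℝ) ^ ((k : ℤ) - 2) ∧
      (2 : ℝ) ^ ((k : ℤ) - 2) ≤ (t.subtreeProd : ℝ) := by
  have hbound : (2 : ℝ) ^ k ≤ 4 * t.subtreeProd := by
    exact_mod_cast ht ▸ t.two_pow_size_le_four_mul_subtreeProd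
  have hzpow : (2 : ℝ) ^ ((k : ℤ) - 2) = 2 ^ k / 4 := by
    rw [zpow_sub₀ two_ne_zero, zpow_natCast]
    norm_num
  have hprod : (2 : ℝ) ^ ((k : ℤ) - 2) ≤ t.subtreeProd := by
    rw [hzpow]
    linarith
  exact ⟨one_div_le_one_div_of_le (by positivity) hprod, hprod⟩

/-- For a plane binary tree `t` of size `k ≥ 1`, the weight
`w(t) = 1/∏_{s fringe subtree of t} |s|` satisfies `w(t) ≤ 1/2^(k-2)`; equivalently the
product of the sizes of all fringe subtrees of `t` is at least `2^(k-2)`. -/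
theorem stmt7 (t : PBTree) (k : ℕ) (hk : 1 ≤ k) (ht : t.size = k) :
    (1 : ℝ) / (t.subtreeProd : ℝ) ≤ 1 / (2 : ℝ) ^ ((k : ℤ) - 2) ∧
      (2 : ℝ) ^ ((k : ℤ) - 2) ≤ (t.subtreeProd : ℝ) :=
  stmt7_general t k ht
end

section
/- For each integer k ≥ 2 let w_k be a real number with 0 < w_k ≤ 1/2^{k-2}, let u_k = u_{k,w_k} be the solution of u'' − 2u' + (1 − w_k k z^{k-1})u = 0 with u(0) = −1, u'(0) = 0, and suppose ρ_k > 1 is a real number with u_k(ρ_k) = 0 and u_k(x) ≠ 0 for all x ∈ (0, ρ_k). Then k²·(ρ_k − 1)/(2 w_k) → 1 as k → ∞; i.e., ρ̃ = 1 + ε ~ 1 + 2w_k/k². -/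
open scoped BigOperators

/-!
Put `α = 1/(k+1)`, `c = wk/(k+1)²` and `F_β(y) = ₀F₁(; 1+β; y)`. Then
`u_{k,w}(z) = e^z (z F_α(c z^{k+1}) - F_{-α}(c z^{k+1}))`, and `F_β(y) = 1 + y/(1+β) + O(y²)`
with an explicit constant. Near `z = 1`, where `z^{k+1} = 1 + O(1/k²)` as long as
`z - 1 = O(w/k²)`, the bracket `z F_α - F_{-α}` equals `(z - 1) - 2w/k²` up to an error
`(2w/k²)·100/k` once `wk ≤ 4` (which follows from `w ≤ 2^{2-k}`). Hence the bracket vanishes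
at no `ρ > 1` below `1 + (2w/k²)(1 - 100/k)`, while it is nonnegative at
`1 + (2w/k²)(1 + 100/k)`; as `u(0) = -1`, the intermediate value theorem puts a zero in
`(0, 1 + (2w/k²)(1 + 100/k)]`. So the first zero `ρ > 1` satisfies
`|k²(ρ - 1)/(2w) - 1| ≤ 100/k`.
-/

/-- The falling factorial `(x)_m = x (x-1) ⋯ (x-m+1)` of a real number. -/
noncomputable def fallFact (x : ℝ) (m : ℕ) : ℝ := ∏ j ∈ Finset.range m, (x - j)

/-- The function `u_{k,w}`, the solution of `u'' - 2u' + (1 - w k z^(k-1)) u = 0` with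
`u(0) = -1`, `u'(0) = 0`, given by its Bessel-type series. -/
noncomputable def ukw (k : ℕ) (w : ℝ) (z : ℝ) : ℝ :=
  z * Real.exp z * ∑' m : ℕ, (w * k / ((k : ℝ) + 1) ^ 2) ^ m * z ^ ((k + 1) * m) /
      ((Nat.factorial m : ℝ) * fallFact ((m : ℝ) + 1 / ((k : ℝ) + 1)) m)
    - Real.exp z * ∑' m : ℕ, (w * k / ((k : ℝ) + 1) ^ 2) ^ m * z ^ ((k + 1) * m) /
      ((Nat.factorial m : ℝ) * fallFact ((m : ℝ) - 1 / ((k : ℝ) + 1)) m)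

open scoped Nat

lemma pow_le_fallFact_add {β : ℝ} (hβ : 0 ≤ 1 + β) (m : ℕ) :
    (1 + β) ^ m ≤ fallFact (m + β) m := by
  calc (1 + β) ^ m = ∏ _j ∈ Finset.range m, (1 + β) := by simp
    _ ≤ fallFact (m + β) m := Finset.prod_le_prod (fun _ _ => hβ) fun j hj => ?_
  have : (j : ℝ) + 1 ≤ m := by exact_mod_cast Finset.mem_range.mp hj
  linarith

lemma fallFact_add_pos {β : ℝ} (hβ : 0 < 1 + β) (m : ℕ) : 0 < fallFact (m + β) m :=
  (pow_pos hβ m).trans_le (pow_le_fallFact_add hβ.le m)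

/-- Since `(m+β)_m` is the rising factorial `(1+β)^(m)`, this is `₀F₁(; 1+β; y)`. -/
noncomputable def hypergeom0F1 (β y : ℝ) : ℝ :=
  ∑' m : ℕ, y ^ m / (m ! * fallFact (m + β) m)

section Hypergeom0F1

variable {β : ℝ}

lemma abs_hypergeom0F1_term_le (hβ : 0 < 1 + β) (y : ℝ) (m : ℕ) :
    |y ^ m / (m ! * fallFact (m + β) m)| ≤ (|y| / (1 + β)) ^ m / m ! := by
  have hF := fallFact_add_pos hβ m
  rw [abs_div, abs_pow, abs_of_pos (by positivity : (0 : ℝ) < m ! * fallFact (m + β) m),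
    div_pow, div_div, mul_comm ((1 + β) ^ m)]
  gcongr
  exact pow_le_fallFact_add hβ.le m

lemma hypergeom0F1_term_nonneg (hβ : 0 < 1 + β) {y : ℝ} (hy : 0 ≤ y) (m : ℕ) :
    0 ≤ y ^ m / (m ! * fallFact (m + β) m) := by
  have := fallFact_add_pos hβ m
  positivity

lemma continuous_hypergeom0F1 (hβ : 0 < 1 + β) : Continuous (hypergeom0F1 β) := by
  refine continuous_iff_continuousAt.mpr fun y₀ => ?_
  set Y := |y₀| + 1
  have hcont : ContinuousOn (hypergeom0F1 β) (Set.Icc (-Y) Y) := by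
    refine continuousOn_tsum (fun m => by fun_prop)
      (Real.summable_pow_div_factorial (Y / (1 + β))) fun m y hy => ?_
    refine (abs_hypergeom0F1_term_le hβ y m).trans ?_
    gcongr
    exact abs_le.mpr hy
  exact hcont.continuousAt (Icc_mem_nhds (by linarith [abs_nonneg y₀, neg_abs_le y₀])
    (by linarith [le_abs_self y₀]))

/-- The tail `∑_{m ≥ 2}` is dominated by that of `exp q`, which is at most `q²`. -/
lemma tsum_le_add_sq_of_le_pow_div_factorial {f : ℕ → ℝ} {q : ℝ} (hq0 : 0 ≤ q)
    (hq1 : q ≤ 1) (hf0 : ∀ m, 0 ≤ f m) (hf : ∀ m, f m ≤ q ^ m / m !) :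
    f 0 + f 1 ≤ ∑' m, f m ∧ ∑' m, f m ≤ f 0 + f 1 + q ^ 2 := by
  have hexp := NormedSpace.expSeries_div_hasSum_exp q
  have hfs : Summable f := .of_nonneg_of_le hf0 hf hexp.summable
  rw [← hfs.sum_add_tsum_nat_add 2]
  have hexp_split : 1 + q + ∑' m, q ^ (m + 2) / (m + 2)! = Real.exp q := by
    rw [Real.exp_eq_exp_ℝ, ← hexp.tsum_eq, ← hexp.summable.sum_add_tsum_nat_add 2]
    simp [Finset.sum_range_succ]
  have htail : ∑' m, f (m + 2) ≤ ∑' m, q ^ (m + 2) / (m + 2)! :=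
    ((summable_nat_add_iff 2).mpr hfs).tsum_le_tsum (fun m => hf (m + 2))
      ((summable_nat_add_iff 2).mpr hexp.summable)
  have hexp_le : Real.exp q - 1 - q ≤ q ^ 2 :=
    (le_abs_self _).trans (Real.abs_exp_sub_one_sub_id_le (by rwa [abs_of_nonneg hq0]))
  simp only [Finset.sum_range_succ, Finset.sum_range_zero, zero_add]
  exact ⟨le_add_of_nonneg_right (tsum_nonneg fun m => hf0 _), by linarith⟩

lemma hypergeom0F1_bounds (hβ : 0 < 1 + β) {y : ℝ} (hy : 0 ≤ y) (hyβ : y ≤ 1 + β) :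
    1 + y / (1 + β) ≤ hypergeom0F1 β y ∧
      hypergeom0F1 β y ≤ 1 + y / (1 + β) + (y / (1 + β)) ^ 2 := by
  have hterm m : y ^ m / (m ! * fallFact (m + β) m) ≤ (y / (1 + β)) ^ m / m ! := by
    simpa only [abs_of_nonneg hy] using (le_abs_self _).trans (abs_hypergeom0F1_term_le hβ y m)
  have h := tsum_le_add_sq_of_le_pow_div_factorial (div_nonneg hy hβ.le)
    ((div_le_one hβ).mpr hyβ) (hypergeom0F1_term_nonneg hβ hy) hterm
  simpa [hypergeom0F1, fallFact] using h

end Hypergeom0F1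

lemma hypergeom0F1_zero (β : ℝ) : hypergeom0F1 β 0 = 1 := by
  rw [hypergeom0F1, tsum_eq_single 0 fun m hm => by simp [hm]]
  simp [fallFact]

lemma mul_le_four_of_le_inv_two_pow {k : ℕ} {w : ℝ} (hk : 2 ≤ k) (hw : w ≤ 1 / 2 ^ (k - 2)) :
    w * k ≤ 4 := by
  obtain ⟨j, rfl⟩ : ∃ j, k = j + 2 := ⟨k - 2, by omega⟩
  rw [Nat.add_sub_cancel] at hw
  have hj : ((j + 2 : ℕ) : ℝ) ≤ 4 * 2 ^ j := by
    have : j + 2 < 2 ^ (j + 2) := Nat.lt_two_pow_self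
    rw [pow_add] at this
    exact_mod_cast (by omega : j + 2 ≤ 2 ^ j * 4).trans_eq (mul_comm _ _)
  calc w * ((j + 2 : ℕ) : ℝ) ≤ 1 / 2 ^ j * (4 * 2 ^ j) := by gcongr
    _ = 4 := by field_simp

lemma pow_le_one_add_two_mul {x : ℝ} (hx : 1 ≤ x) {n : ℕ} (h : n * (x - 1) ≤ 1) :
    x ^ n ≤ 1 + 2 * n * (x - 1) := by
  have hs : 0 ≤ n * (x - 1) := by have := sub_nonneg.mpr hx; positivity
  calc x ^ n ≤ Real.exp (x - 1) ^ n := by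
        gcongr; linarith [Real.add_one_le_exp (x - 1)]
    _ = Real.exp (n * (x - 1)) := (Real.exp_nat_mul _ _).symm
    _ ≤ 1 + 2 * (n * (x - 1)) := by
        have := Real.abs_exp_sub_one_le (x := n * (x - 1)) (by rwa [abs_of_nonneg hs])
        rw [abs_of_nonneg hs] at this
        linarith [le_abs_self (Real.exp (n * (x - 1)) - 1)]
    _ = 1 + 2 * n * (x - 1) := by ring

lemma abs_two_mul_div_add_one_mul_add_two_sub_le {K w X : ℝ} (hK : 100 ≤ K) (hw : 0 ≤ w)
    (hX1 : 1 ≤ X) (hX : X ≤ 1 + 2 * (32 / K ^ 2)) :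
    |2 * w * X / ((K + 1) * (K + 2)) - 2 * w / K ^ 2| ≤ 64 * (w / K ^ 3) := by
  have hK0 : (0 : ℝ) < K := by positivity
  rw [abs_le]
  constructor
  · have hT : 2 * w / ((K + 1) * (K + 2)) ≤ 2 * w * X / ((K + 1) * (K + 2)) :=
      div_le_div_of_nonneg_right (by nlinarith) (by positivity)
    have : 2 * w / K ^ 2 - 2 * w / ((K + 1) * (K + 2)) ≤ 6 * (w / K ^ 3) := by
      rw [div_sub_div _ _ (by positivity) (by positivity), mul_div_assoc',
        div_le_div_iff₀ (by positivity) (by positivity)]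
      nlinarith [mul_nonneg hw (pow_pos hK0 2).le]
    linarith [show 0 ≤ w / K ^ 3 by positivity]
  · have hT : 2 * w * X / ((K + 1) * (K + 2)) ≤ 2 * w * (1 + 2 * (32 / K ^ 2)) / K ^ 2 := by
      gcongr; nlinarith
    calc _ ≤ 2 * w * (1 + 2 * (32 / K ^ 2)) / K ^ 2 - 2 * w / K ^ 2 := by linarith
      _ = 128 / K * (w / K ^ 3) := by field_simp; ring
      _ ≤ 64 * (w / K ^ 3) := by gcongr; rw [div_le_iff₀ hK0]; linarith

noncomputable def ukwCore (k : ℕ) (w z : ℝ) : ℝ :=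
  z * hypergeom0F1 (1 / (k + 1)) (w * k / (k + 1) ^ 2 * z ^ (k + 1))
    - hypergeom0F1 (-(1 / (k + 1))) (w * k / (k + 1) ^ 2 * z ^ (k + 1))

section Ukw

variable {k : ℕ} {w x : ℝ}

lemma ukw_eq_exp_mul_ukwCore (k : ℕ) (w z : ℝ) : ukw k w z = Real.exp z * ukwCore k w z := by
  simp only [ukw, ukwCore, hypergeom0F1, mul_pow, ← pow_mul, ← sub_eq_add_neg]
  ring

lemma ukw_zero (k : ℕ) (w : ℝ) : ukw k w 0 = -1 := by
  simp [ukw_eq_exp_mul_ukwCore, ukwCore, hypergeom0F1_zero]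

lemma one_add_neg_one_div_succ_pos (hk : 1 ≤ k) : (0 : ℝ) < 1 + -(1 / (k + 1)) := by
  have : (1 : ℝ) ≤ k := by exact_mod_cast hk
  rw [← sub_eq_add_neg, sub_pos, div_lt_one (by positivity)]
  linarith

lemma continuous_ukw (hk : 1 ≤ k) (w : ℝ) : Continuous (ukw k w) := by
  have hplus := continuous_hypergeom0F1 (β := 1 / (k + 1)) (by positivity)
  have hminus := continuous_hypergeom0F1 (one_add_neg_one_div_succ_pos hk)
  simp only [funext (ukw_eq_exp_mul_ukwCore k w), ukwCore]
  fun_prop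

lemma ukwCore_bounds (hk : 1 ≤ k) (hw : 0 ≤ w) (hx : 0 ≤ x) (hq : w * x ^ (k + 1) ≤ k + 1) :
    x * (1 + w * k * x ^ (k + 1) / ((k + 1) * (k + 2)))
        - (1 + w * x ^ (k + 1) / (k + 1) + (w * x ^ (k + 1) / (k + 1)) ^ 2) ≤ ukwCore k w x ∧
      ukwCore k w x ≤ x * (1 + w * k * x ^ (k + 1) / ((k + 1) * (k + 2))
          + (w * k * x ^ (k + 1) / ((k + 1) * (k + 2))) ^ 2) - (1 + w * x ^ (k + 1) / (k + 1)) := by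
  have hK : (1 : ℝ) ≤ k := by exact_mod_cast hk
  set X := x ^ (k + 1)
  set y := w * k / (k + 1) ^ 2 * X with hy_def
  have hy : 0 ≤ y := by positivity
  have hp : y / (1 + 1 / (k + 1)) = w * k * X / ((k + 1) * (k + 2)) := by
    rw [hy_def]; field_simp; ring
  have hq' : y / (1 + -(1 / (k + 1))) = w * X / (k + 1) := by
    have hk0 : (k : ℝ) ≠ 0 := by positivity
    rw [hy_def, ← sub_eq_add_neg, one_sub_div (by positivity), add_sub_cancel_right]
    field_simp
  have hα := one_add_neg_one_div_succ_pos (k := k) hk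
  have hyq : y ≤ 1 + -(1 / (k + 1)) := by
    rw [← div_le_one hα, hq', div_le_one (by positivity)]; exact hq
  obtain ⟨hA₁, hA₂⟩ := hypergeom0F1_bounds (β := 1 / (k + 1)) (by positivity) hy
    (hyq.trans (by linarith [one_div_pos.mpr (by positivity : (0 : ℝ) < k + 1)]))
  obtain ⟨hB₁, hB₂⟩ := hypergeom0F1_bounds hα hy hyq
  rw [hp] at hA₁ hA₂
  rw [hq'] at hB₁ hB₂
  constructor <;> simp only [ukwCore] <;> nlinarith

lemma abs_ukwCore_sub_first_order_le (hk : 1 ≤ k) (hw : 0 ≤ w) (hx1 : 1 ≤ x) (hx2 : x ≤ 2)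
    (hq : w * x ^ (k + 1) ≤ k + 1) :
    |ukwCore k w x - (x - 1 - 2 * w * x ^ (k + 1) / ((k + 1) * (k + 2)))|
      ≤ (x - 1) * (w * x ^ (k + 1) / (k + 1)) + 2 * (w * x ^ (k + 1) / (k + 1)) ^ 2 := by
  obtain ⟨hlow, hupp⟩ := ukwCore_bounds hk hw (by linarith) hq
  set X := x ^ (k + 1)
  set p := w * k * X / ((k + 1) * (k + 2))
  set q := w * X / (k + 1)
  have hX : 0 ≤ X := by positivity
  have hp : 0 ≤ p := by positivity
  have hpq : p - q = -(2 * w * X / ((k + 1) * (k + 2))) := by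
    simp only [p, q]; field_simp; ring
  have hpq' : p ≤ q := by linarith [show 0 ≤ 2 * w * X / ((k + 1) * (k + 2)) by positivity]
  rw [abs_le]
  constructor <;> nlinarith [mul_le_mul hpq' hpq' hp (hp.trans hpq')]

lemma pow_succ_le_one_add_of_le (hk : 100 ≤ k) (hwk : w * k ≤ 4) (hx1 : 1 ≤ x)
    (hx2 : x ≤ 1 + 4 * w / k ^ 2) : x ^ (k + 1) ≤ 1 + 2 * (32 / k ^ 2) := by
  have hK : (100 : ℝ) ≤ k := by exact_mod_cast hk
  have he : (k + 1) * (x - 1) ≤ 32 / k ^ 2 := by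
    calc (k + 1) * (x - 1) ≤ (2 * k) * (4 * w / k ^ 2) := by gcongr <;> linarith
      _ = 8 * (w * k) / k ^ 2 := by ring
      _ ≤ 32 / k ^ 2 := by gcongr; linarith
  have h32 : 32 / (k : ℝ) ^ 2 ≤ 1 := by
    rw [div_le_one (by positivity)]; nlinarith
  have hX := pow_le_one_add_two_mul hx1 (n := k + 1) (by push_cast; linarith)
  push_cast at hX
  linarith

lemma abs_ukwCore_sub_le (hk : 100 ≤ k) (hw : 0 < w) (hwk : w * k ≤ 4) (hx1 : 1 ≤ x)
    (hx2 : x ≤ 1 + 4 * w / k ^ 2) :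
    |ukwCore k w x - (x - 1 - 2 * w / k ^ 2)| ≤ 2 * w / k ^ 2 * (100 / k) := by
  have hK : (100 : ℝ) ≤ k := by exact_mod_cast hk
  have hX := pow_succ_le_one_add_of_le hk hwk hx1 hx2
  have hX1 : 1 ≤ x ^ (k + 1) := one_le_pow₀ hx1
  have h32 : 32 / (k : ℝ) ^ 2 ≤ 1 / 100 := by
    rw [div_le_div_iff₀ (by positivity) (by positivity)]; nlinarith
  have hx2' : x ≤ 2 := by
    have : 4 * w / (k : ℝ) ^ 2 ≤ 1 := by
      rw [div_le_one (by positivity)]; nlinarith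
    linarith
  have hw1 : w * x ^ (k + 1) ≤ k + 1 := by nlinarith
  have hlin := abs_ukwCore_sub_first_order_le (by omega) hw.le hx1 hx2' hw1
  have hT := abs_two_mul_div_add_one_mul_add_two_sub_le hK hw.le hX1 hX
  set K : ℝ := (k : ℝ)
  set X := x ^ (k + 1)
  have hq : w * X / (K + 1) ≤ 3 * w / K := by
    rw [div_le_div_iff₀ (by positivity) (by positivity)]
    nlinarith [mul_le_mul_of_nonneg_left (show X ≤ 3 by linarith) (by positivity : 0 ≤ w * K)]
  have h1 : (x - 1) * (w * X / (K + 1)) ≤ 48 * (w / K ^ 3) := by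
    calc (x - 1) * (w * X / (K + 1)) ≤ 4 * w / K ^ 2 * (3 * w / K) := by gcongr; linarith
      _ = 2 * w / K ^ 2 * (6 * w / K) := by ring
      _ ≤ 2 * w / K ^ 2 * (24 / K) := by gcongr; nlinarith
      _ = 48 * (w / K ^ 3) := by ring
  have h2 : 2 * (w * X / (K + 1)) ^ 2 ≤ 72 * (w / K ^ 3) := by
    calc 2 * (w * X / (K + 1)) ^ 2 ≤ 2 * (3 * w / K) ^ 2 := by gcongr
      _ = 2 * w / K ^ 2 * (9 * w) := by field_simp; ring
      _ ≤ 2 * w / K ^ 2 * (36 / K) := by gcongr; rw [le_div_iff₀ (by positivity)]; linarith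
      _ = 72 * (w / K ^ 3) := by ring
  rw [abs_le] at hlin hT ⊢
  rw [show 2 * w / K ^ 2 * (100 / K) = 200 * (w / K ^ 3) by ring]
  constructor <;> linarith [hlin.1, hlin.2, hT.1, hT.2]

lemma ukw_eq_zero_iff {z : ℝ} : ukw k w z = 0 ↔ ukwCore k w z = 0 := by
  simp [ukw_eq_exp_mul_ukwCore, Real.exp_ne_zero]

lemma ukw_nonneg_iff {z : ℝ} : 0 ≤ ukw k w z ↔ 0 ≤ ukwCore k w z := by
  rw [ukw_eq_exp_mul_ukwCore]
  exact mul_nonneg_iff_of_pos_left (Real.exp_pos z)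

lemma abs_sub_one_sub_le_of_ukw_eq_zero (hk : 100 ≤ k) (hw : 0 < w) (hwk : w * k ≤ 4) {ρ : ℝ}
    (hρ1 : 1 < ρ) (hρ : ukw k w ρ = 0) (hmin : ∀ x ∈ Set.Ioo 0 ρ, ukw k w x ≠ 0) :
    |ρ - 1 - 2 * w / k ^ 2| ≤ 2 * w / k ^ 2 * (100 / k) := by
  have hK : (100 : ℝ) ≤ k := by exact_mod_cast hk
  set D := 2 * w / (k : ℝ) ^ 2
  set η := 100 / (k : ℝ)
  have hD : 0 < D := by positivity
  have hη : 0 ≤ η ∧ η ≤ 1 :=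
    ⟨by positivity, by rw [div_le_one (by positivity)]; exact hK⟩
  have h4w : 4 * w / (k : ℝ) ^ 2 = 2 * D := by ring
  rw [abs_le]
  constructor
  · by_contra! hlt
    have hcore := abs_ukwCore_sub_le hk hw hwk hρ1.le (by nlinarith)
    rw [ukw_eq_zero_iff.mp hρ, abs_le] at hcore
    linarith [hcore.1]
  · by_contra! hgt
    set r := 1 + D * (1 + η)
    have hr1 : 1 ≤ r := by nlinarith
    have hcore := abs_ukwCore_sub_le hk hw hwk hr1 (by nlinarith)
    have hr : 0 ≤ ukw k w r := by
      rw [abs_le] at hcore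
      exact ukw_nonneg_iff.mpr (by linarith [hcore.1])
    obtain ⟨z, hz, hz0⟩ := intermediate_value_Ioc (by linarith)
      (continuous_ukw (by omega) w).continuousOn
      (show (0 : ℝ) ∈ Set.Ioc (ukw k w 0) (ukw k w r) by
        rw [ukw_zero]; exact ⟨by norm_num, hr⟩)
    exact hmin z ⟨hz.1, by linarith [hz.2]⟩ hz0

end Ukw

/-- If for each `k ≥ 2`, `0 < w k ≤ 1/2^(k-2)` and `ρ k > 1` is the smallest
positive zero of `u_{k, w k}`, then `k² (ρ k - 1)/(2 w k) → 1` as `k → ∞`, i.e.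
`ρ̃ = 1 + ε ~ 1 + 2 w k / k²`. -/
theorem stmt10 (w ρ : ℕ → ℝ)
    (hw : ∀ k : ℕ, 2 ≤ k → 0 < w k ∧ w k ≤ 1 / 2 ^ (k - 2))
    (hρ : ∀ k : ℕ, 2 ≤ k → 1 < ρ k ∧ ukw k (w k) (ρ k) = 0 ∧
      ∀ x ∈ Set.Ioo (0 : ℝ) (ρ k), ukw k (w k) x ≠ 0) :
    Filter.Tendsto (fun k : ℕ => (k : ℝ) ^ 2 * (ρ k - 1) / (2 * w k))
      Filter.atTop (nhds 1) := by
  have hbound : ∀ k : ℕ, 100 ≤ k →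
      |(k : ℝ) ^ 2 * (ρ k - 1) / (2 * w k) - 1| ≤ (100 : ℝ) / k := by
    intro k hk
    obtain ⟨hw0, hw1⟩ := hw k (by omega)
    obtain ⟨hρ1, hρ0, hmin⟩ := hρ k (by omega)
    have h := abs_sub_one_sub_le_of_ukw_eq_zero hk hw0
      (mul_le_four_of_le_inv_two_pow (by omega) hw1) hρ1 hρ0 hmin
    have hk0 : (0 : ℝ) < k := by positivity
    have hD : (0 : ℝ) < 2 * w k / k ^ 2 := by positivity
    rw [show (k : ℝ) ^ 2 * (ρ k - 1) / (2 * w k) - 1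
        = (ρ k - 1 - 2 * w k / k ^ 2) / (2 * w k / k ^ 2) by field_simp,
      abs_div, abs_of_pos hD, div_le_iff₀ hD]
    exact h.trans_eq (mul_comm _ _)
  rw [tendsto_iff_dist_tendsto_zero]
  refine squeeze_zero' (Filter.Eventually.of_forall fun _ => dist_nonneg)
    (Filter.eventually_atTop.mpr ⟨100, fun k hk => hbound k hk⟩) ?_
  exact tendsto_const_div_atTop_nhds_zero_nat 100
end

section
/- For every δ with 0 < δ < 2 there exists an integer K such that for all integers k ≥ K and all real w with 0 < w ≤ 1/2^{k-2} the following holds: let u_{k,w} be extended to the complex plane by its power series, and suppose ρ̃ > 1 is a real number with u_{k,w}(ρ̃) = 0 and u_{k,w}(x) ≠ 0 for all x ∈ (0, ρ̃). Then u_{k,w} has no complex zero z with ρ̃ < |z| < 1 + (2−δ)·(ln k)/k. -/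
open scoped BigOperators

/-- The falling factorial `(x)_m = x (x-1) ⋯ (x-m+1)` of a complex number. -/
noncomputable def fallFactC (x : ℂ) (m : ℕ) : ℂ := ∏ j ∈ Finset.range m, (x - j)

/-- The entire function `u_{k,w}`, extended to the complex plane by its power series; it is the
solution of `u'' - 2u' + (1 - w k z^(k-1)) u = 0` with `u(0) = -1`, `u'(0) = 0`. -/
noncomputable def ukwC (k : ℕ) (w : ℝ) (z : ℂ) : ℂ :=
  z * Complex.exp z * ∑' m : ℕ, ((w : ℂ) * k / ((k : ℂ) + 1) ^ 2) ^ m * z ^ ((k + 1) * m) /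
      ((Nat.factorial m : ℂ) * fallFactC ((m : ℂ) + 1 / ((k : ℂ) + 1)) m)
    - Complex.exp z * ∑' m : ℕ, ((w : ℂ) * k / ((k : ℂ) + 1) ^ 2) ^ m * z ^ ((k + 1) * m) /
      ((Nat.factorial m : ℂ) * fallFactC ((m : ℂ) - 1 / ((k : ℂ) + 1)) m)

/-!
Write `u_{k,w}(ζ) = e^ζ F(ζ)` with `F(ζ) = ζ A(ζ^(k+1)) - B(ζ^(k+1))`, where `A` and `B` are
`₀F₁`-series with constant term `1` whose `m`-th coefficients are at most `(2w/k)^m / m!`.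
Thus `F(ζ) = (ζ - 1) + G(ζ)`, and on the disc of radius `R = 1 + 2 ln k / k` the perturbation `G`
is a contraction once `k` is large: `R^(k+1) ≤ k^4` while `w ≤ 4 / 2^k`. Hence `F` is injective
on that disc, so `u_{k,w}` has at most one zero there, namely `ρ̃`; and the disc contains every
`z` with `|z| < 1 + (2 - δ) ln k / k`.
-/

open scoped Nat
open Complex Filter Metric Set

section PerturbedIdentity

variable {E : Type*} [NormedAddCommGroup E]

theorem injOn_tsum_of_lipschitz_tail {s : Set E} {t : ℕ → E → E} {L : ℕ → ℝ} {ℓ : ℝ}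
    (hsum : ∀ x ∈ s, Summable fun m => t m x) (h0 : ∀ x y, t 0 x - t 0 y = x - y)
    (hL : ∀ m, ∀ x ∈ s, ∀ y ∈ s, ‖t (m + 1) x - t (m + 1) y‖ ≤ L m * ‖x - y‖)
    (hLsum : HasSum L ℓ) (hℓ : ℓ < 1) : InjOn (fun x => ∑' m, t m x) s := by
  intro x hx y hy hxy
  have hdiff : Summable fun m => t m x - t m y := (hsum x hx).sub (hsum y hy)
  have htail : x - y = -∑' m, (t (m + 1) x - t (m + 1) y) := by
    have h := (hsum x hx).tsum_sub (hsum y hy)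
    rw [show ∑' m, t m x = ∑' m, t m y from hxy, sub_self, hdiff.tsum_eq_zero_add, h0] at h
    exact eq_neg_of_add_eq_zero_left h
  have hle : ‖x - y‖ ≤ ℓ * ‖x - y‖ := by
    conv_lhs => rw [htail, norm_neg]
    exact tsum_of_norm_bounded (hLsum.mul_right _) fun m => hL m x hx y hy
  have hxy0 : ‖x - y‖ = 0 := by nlinarith [norm_nonneg (x - y)]
  exact sub_eq_zero.mp (norm_eq_zero.mp hxy0)

end PerturbedIdentity

theorem norm_pow_sub_pow_le {𝕜 : Type*} [NormedCommRing 𝕜] [NormOneClass 𝕜] {x y : 𝕜} {R : ℝ}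
    (hx : ‖x‖ ≤ R) (hy : ‖y‖ ≤ R) (n : ℕ) : ‖x ^ n - y ^ n‖ ≤ n * R ^ (n - 1) * ‖x - y‖ := by
  have hR : 0 ≤ R := (norm_nonneg x).trans hx
  rw [← geom_sum₂_mul]
  refine (norm_mul_le _ _).trans ?_
  gcongr
  calc ‖∑ i ∈ Finset.range n, x ^ i * y ^ (n - 1 - i)‖
      ≤ ∑ i ∈ Finset.range n, ‖x‖ ^ i * ‖y‖ ^ (n - 1 - i) :=
        (norm_sum_le _ _).trans <| Finset.sum_le_sum fun i _ =>
          (norm_mul_le _ _).trans (mul_le_mul (norm_pow_le _ _) (norm_pow_le _ _)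
            (norm_nonneg _) (by positivity))
    _ ≤ ∑ i ∈ Finset.range n, R ^ (n - 1) := Finset.sum_le_sum fun i hi => by
        calc ‖x‖ ^ i * ‖y‖ ^ (n - 1 - i) ≤ R ^ i * R ^ (n - 1 - i) := by gcongr
          _ = R ^ (n - 1) := by
            rw [← pow_add]; congr 1; have := Finset.mem_range.mp hi; omega
    _ = n * R ^ (n - 1) := by simp

section LacunarySeries

variable {N : ℕ} {a b : ℕ → ℂ} {r R : ℝ}

theorem summable_mul_pow_of_norm_le (ha : ∀ m, ‖a m‖ ≤ r ^ m / m !) (j : ℕ) (ζ : ℂ) :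
    Summable fun m => a m * ζ ^ (N * m + j) := by
  refine .of_norm_bounded ((Real.summable_pow_div_factorial (r * ‖ζ‖ ^ N)).mul_left (‖ζ‖ ^ j))
    fun m => ?_
  rw [norm_mul, norm_pow, pow_add, pow_mul, mul_pow, mul_div_right_comm]
  calc ‖a m‖ * ((‖ζ‖ ^ N) ^ m * ‖ζ‖ ^ j) ≤ r ^ m / m ! * ((‖ζ‖ ^ N) ^ m * ‖ζ‖ ^ j) := by
        gcongr
        exact ha m
    _ = _ := by ring

theorem norm_lacunary_term_sub_le (hR : 1 ≤ R) (ha : ∀ m, ‖a m‖ ≤ r ^ m / m !)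
    (hb : ∀ m, ‖b m‖ ≤ r ^ m / m !) {z ζ : ℂ} (hz : ‖z‖ ≤ R) (hζ : ‖ζ‖ ≤ R) {m : ℕ}
    (hm : m ≠ 0) :
    ‖(a m * z ^ (N * m + 1) - b m * z ^ (N * m)) - (a m * ζ ^ (N * m + 1) - b m * ζ ^ (N * m))‖
      ≤ (2 * N + 1) * (r * R ^ N) ^ m * ‖z - ζ‖ := by
  have hr : 0 ≤ r ^ m := by
    have := mul_nonneg ((norm_nonneg _).trans (ha m)) (Nat.cast_nonneg (m !))
    rwa [div_mul_cancel₀ _ (by positivity)] at this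
  have hA := norm_pow_sub_pow_le hz hζ (N * m + 1)
  have hB := norm_pow_sub_pow_le hz hζ (N * m)
  rw [Nat.add_sub_cancel] at hA
  have hRpow : R ^ (N * m - 1) ≤ R ^ (N * m) := pow_le_pow_right₀ hR (Nat.sub_le _ _)
  have hfact : (2 * N * m + 1 : ℝ) ≤ (2 * N + 1) * m ! := by
    have : 2 * N * m + 1 ≤ (2 * N + 1) * m ! := by
      nlinarith [Nat.self_le_factorial m, Nat.one_le_iff_ne_zero.mpr hm]
    exact_mod_cast this
  calc _ = ‖a m * (z ^ (N * m + 1) - ζ ^ (N * m + 1)) - b m * (z ^ (N * m) - ζ ^ (N * m))‖ := by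
        ring_nf
    _ ≤ ‖a m‖ * ‖z ^ (N * m + 1) - ζ ^ (N * m + 1)‖ + ‖b m‖ * ‖z ^ (N * m) - ζ ^ (N * m)‖ :=
        (norm_sub_le _ _).trans_eq (by rw [norm_mul, norm_mul])
    _ ≤ r ^ m / m ! * ((N * m + 1 : ℕ) * R ^ (N * m) * ‖z - ζ‖)
          + r ^ m / m ! * ((N * m : ℕ) * R ^ (N * m) * ‖z - ζ‖) := by
        gcongr
        · exact ha m
        · exact hb m
        · exact hB.trans (by gcongr)
    _ = (2 * N * m + 1) / m ! * (r * R ^ N) ^ m * ‖z - ζ‖ := by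
        rw [mul_pow, ← pow_mul]; push_cast; ring
    _ ≤ (2 * N + 1) * (r * R ^ N) ^ m * ‖z - ζ‖ := by
        gcongr
        · rw [mul_pow]; positivity
        rw [div_le_iff₀ (by positivity)]; exact hfact

theorem injOn_tsum_lacunary (hR : 1 ≤ R) (ha0 : a 0 = 1) (hb0 : b 0 = 1)
    (ha : ∀ m, ‖a m‖ ≤ r ^ m / m !) (hb : ∀ m, ‖b m‖ ≤ r ^ m / m !)
    (hq : (2 * N + 2) * (r * R ^ N) < 1) :
    InjOn (fun ζ => ∑' m, (a m * ζ ^ (N * m + 1) - b m * ζ ^ (N * m))) (closedBall 0 R) := by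
  set q := r * R ^ N
  have hq0 : 0 ≤ q := by
    have hr : 0 ≤ r := by simpa using (norm_nonneg _).trans (ha 1)
    positivity
  have hq1 : q < 1 := by nlinarith
  refine injOn_tsum_of_lipschitz_tail (L := fun m => (2 * N + 1) * q * q ^ m)
    (fun ζ _ => (summable_mul_pow_of_norm_le ha 1 ζ).sub (summable_mul_pow_of_norm_le hb 0 ζ))
    (fun z ζ => by simp [ha0, hb0])
    (fun m z hz ζ hζ => ?_)
    ((hasSum_geometric_of_lt_one hq0 hq1).mul_left _) ?_
  · rw [mul_assoc _ q, ← pow_succ']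
    exact norm_lacunary_term_sub_le hR ha hb (mem_closedBall_zero_iff.mp hz)
      (mem_closedBall_zero_iff.mp hζ) m.succ_ne_zero
  · rw [← div_eq_mul_inv, div_lt_one (by linarith)]
    linarith

end LacunarySeries

theorem fallFactC_natCast_add (m : ℕ) (s : ℂ) :
    fallFactC (m + s) m = ∏ j ∈ Finset.range m, (s + (j + 1)) := by
  rw [fallFactC, ← Finset.prod_range_reflect]
  refine Finset.prod_congr rfl fun j hj => ?_
  have hj := Finset.mem_range.mp hj
  rw [show m - 1 - j = m - (j + 1) by omega, Nat.cast_sub (by omega)]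
  push_cast
  ring

theorem factorial_div_two_pow_le_norm_fallFactC (m : ℕ) {s : ℂ} (hs : ‖s‖ ≤ 1 / 2) :
    (m ! : ℝ) / 2 ^ m ≤ ‖fallFactC (m + s) m‖ := by
  have hfact : (m ! : ℝ) / 2 ^ m = ∏ j ∈ Finset.range m, ((j + 1 : ℝ) / 2) := by
    rw [Finset.prod_div_distrib, Finset.prod_const, Finset.card_range,
      ← Finset.prod_range_add_one_eq_factorial]
    push_cast
    rfl
  rw [hfact, fallFactC_natCast_add, norm_prod]
  refine Finset.prod_le_prod (fun j _ => by positivity) fun j _ => ?_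
  have h : ‖((j + 1 : ℕ) : ℂ)‖ ≤ ‖s + (j + 1)‖ + ‖s‖ :=
    calc _ = ‖(s + (j + 1)) + -s‖ := by push_cast; ring_nf
      _ ≤ _ := (norm_add_le _ _).trans_eq (by rw [norm_neg])
  rw [Complex.norm_natCast] at h
  push_cast at h
  linarith

/-- `c ^ m / (m! (m + s)_m) = c ^ m / (m! (s + 1)^(m))`: the coefficients of `₀F₁(; s + 1; c)`. -/
noncomputable def hyp0F1Coeff (s c : ℂ) (m : ℕ) : ℂ := c ^ m / ((m ! : ℂ) * fallFactC (m + s) m)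

theorem norm_hyp0F1Coeff_le {s : ℂ} (hs : ‖s‖ ≤ 1 / 2) (c : ℂ) (m : ℕ) :
    ‖hyp0F1Coeff s c m‖ ≤ (2 * ‖c‖) ^ m / m ! := by
  calc ‖hyp0F1Coeff s c m‖ = ‖c‖ ^ m / (m ! * ‖fallFactC (m + s) m‖) := by
        rw [hyp0F1Coeff, norm_div, norm_mul, norm_pow, Complex.norm_natCast]
    _ ≤ ‖c‖ ^ m / (m ! * (m ! / 2 ^ m)) := by
        gcongr
        exact factorial_div_two_pow_le_norm_fallFactC m hs
    _ = (2 * ‖c‖) ^ m / m ! / m ! := by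
        rw [mul_pow]; field_simp
    _ ≤ (2 * ‖c‖) ^ m / m ! := div_le_self (by positivity) (by exact_mod_cast m.factorial_pos)

theorem norm_one_div_natCast_add_one_le_half {k : ℕ} (hk : k ≠ 0) :
    ‖1 / ((k : ℂ) + 1)‖ ≤ 1 / 2 := by
  have hk1 : (1 : ℝ) ≤ k := by exact_mod_cast Nat.one_le_iff_ne_zero.mpr hk
  rw [norm_div, norm_one, show (k : ℂ) + 1 = ((k + 1 : ℕ) : ℂ) by push_cast; ring,
    Complex.norm_natCast]
  gcongr
  push_cast
  linarith

theorem ukwC_eq_exp_mul {k : ℕ} (hk : k ≠ 0) (w : ℝ) (ζ : ℂ) :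
    ukwC k w ζ = exp ζ * ∑' m,
      (hyp0F1Coeff (1 / ((k : ℂ) + 1)) ((w : ℂ) * k / ((k : ℂ) + 1) ^ 2) m * ζ ^ ((k + 1) * m + 1)
        - hyp0F1Coeff (-(1 / ((k : ℂ) + 1))) ((w : ℂ) * k / ((k : ℂ) + 1) ^ 2) m
          * ζ ^ ((k + 1) * m)) := by
  have hα := norm_one_div_natCast_add_one_le_half hk
  have hα' : ‖-(1 / ((k : ℂ) + 1))‖ ≤ 1 / 2 := by rwa [norm_neg]
  have hB : Summable fun m => hyp0F1Coeff (-(1 / ((k : ℂ) + 1)))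
      ((w : ℂ) * k / ((k : ℂ) + 1) ^ 2) m * ζ ^ ((k + 1) * m) :=
    summable_mul_pow_of_norm_le (norm_hyp0F1Coeff_le hα' _) 0 ζ
  rw [Summable.tsum_sub (summable_mul_pow_of_norm_le (norm_hyp0F1Coeff_le hα _) 1 ζ) hB,
    mul_sub, ← tsum_mul_left, ← tsum_mul_left, ukwC, ← tsum_mul_left, ← tsum_mul_left]
  congr 1 <;> refine tsum_congr fun m => ?_
  · rw [hyp0F1Coeff]; ring
  · rw [hyp0F1Coeff, ← sub_eq_add_neg]; ring

theorem one_add_two_log_div_pow_succ_le {k : ℕ} (hk : k ≠ 0) :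
    (1 + 2 * Real.log k / k) ^ (k + 1) ≤ (k : ℝ) ^ 4 := by
  have hk0 : (0 : ℝ) < k := by positivity
  calc (1 + 2 * Real.log k / k) ^ (k + 1) ≤ Real.exp (2 * Real.log k / k) ^ (k + 1) := by
        gcongr
        linarith [Real.add_one_le_exp (2 * Real.log k / k)]
    _ = Real.exp ((k + 1) / k * 2 * Real.log k) := by
        rw [← Real.exp_nat_mul]; push_cast; ring_nf
    _ ≤ Real.exp (((4 : ℕ) : ℝ) * Real.log k) := by
        gcongr
        rw [div_mul_eq_mul_div, div_le_iff₀ hk0]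
        push_cast
        nlinarith [show (1 : ℝ) ≤ k by exact_mod_cast Nat.one_le_iff_ne_zero.mpr hk]
    _ = (k : ℝ) ^ 4 := by rw [Real.exp_nat_mul, Real.exp_log hk0]

theorem norm_ukwC_param_le {k : ℕ} (hk : k ≠ 0) {w : ℝ} (hw0 : 0 < w)
    (hw : w ≤ 1 / 2 ^ (k - 2)) : ‖(w : ℂ) * k / ((k : ℂ) + 1) ^ 2‖ ≤ 4 / (k * 2 ^ k) := by
  have hk0 : (0 : ℝ) < k := by positivity
  -- `k - 2` truncates, so this also covers `k < 2`
  have hw4 : w ≤ 4 / 2 ^ k := by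
    refine hw.trans ?_
    rw [div_le_div_iff₀ (by positivity) (by positivity), one_mul]
    calc (2 : ℝ) ^ k ≤ 2 ^ (k - 2 + 2) := pow_le_pow_right₀ one_le_two (by omega)
      _ = 4 * 2 ^ (k - 2) := by rw [pow_add]; ring
  rw [show (w : ℂ) * k / ((k : ℂ) + 1) ^ 2 = ((w * k / ((k : ℝ) + 1) ^ 2 : ℝ) : ℂ) by
      push_cast; rfl, Complex.norm_real, Real.norm_of_nonneg (by positivity)]
  calc w * k / ((k : ℝ) + 1) ^ 2 ≤ w / k := by
        rw [div_le_div_iff₀ (by positivity) hk0]; nlinarith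
    _ ≤ (4 / 2 ^ k) / k := by gcongr
    _ = 4 / (k * 2 ^ k) := by field_simp

theorem ukwC_zeros_subsingleton {k : ℕ} (hk : k ≠ 0) (hsmall : (k : ℝ) ^ 4 / 2 ^ k < 1 / 48)
    {w : ℝ} (hw0 : 0 < w) (hw : w ≤ 1 / 2 ^ (k - 2)) :
    ({ζ | ukwC k w ζ = 0} ∩ closedBall 0 (1 + 2 * Real.log k / k)).Subsingleton := by
  set R := 1 + 2 * Real.log k / k
  set c : ℂ := (w : ℂ) * k / ((k : ℂ) + 1) ^ 2
  have hR : 1 ≤ R := by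
    have : 0 ≤ 2 * Real.log k / k := by have := Real.log_natCast_nonneg k; positivity
    linarith
  have hc : ‖c‖ ≤ 4 / (k * 2 ^ k) := norm_ukwC_param_le hk hw0 hw
  have hq : (2 * (k + 1 : ℕ) + 2) * (2 * ‖c‖ * R ^ (k + 1)) < 1 := by
    have hk1 : (1 : ℝ) ≤ k := by exact_mod_cast Nat.one_le_iff_ne_zero.mpr hk
    have hk3 : (0 : ℝ) < k ^ 3 := by positivity
    calc (2 * (k + 1 : ℕ) + 2) * (2 * ‖c‖ * R ^ (k + 1))
        ≤ (2 * k + 4) * (2 * (4 / (k * 2 ^ k)) * k ^ 4) := by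
          rw [show (2 * (k + 1 : ℕ) + 2 : ℝ) = 2 * k + 4 by push_cast; ring]
          gcongr
          exact one_add_two_log_div_pow_succ_le hk
      _ = 8 * (2 * k + 4) * k ^ 3 / 2 ^ k := by field_simp; ring
      _ ≤ 48 * k ^ 4 / 2 ^ k := by gcongr ?_ / _; nlinarith
      _ < 1 := by rw [mul_div_assoc]; linarith
  have hα := norm_one_div_natCast_add_one_le_half hk
  have hα' : ‖-(1 / ((k : ℂ) + 1))‖ ≤ 1 / 2 := by rwa [norm_neg]
  have hinj := injOn_tsum_lacunary hR (by simp [hyp0F1Coeff, fallFactC])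
    (by simp [hyp0F1Coeff, fallFactC]) (norm_hyp0F1Coeff_le hα c)
    (norm_hyp0F1Coeff_le hα' c) hq
  rintro z ⟨hz, hzR⟩ ζ ⟨hζ, hζR⟩
  refine hinj hzR hζR ?_
  simp only [ukwC_eq_exp_mul hk, mul_eq_zero, exp_ne_zero, false_or] at hz hζ
  exact hz.trans hζ.symm

theorem stmt12_general (δ : ℝ) (hδ0 : 0 < δ) :
    ∃ K : ℕ, ∀ k : ℕ, K ≤ k → ∀ w : ℝ, 0 < w → w ≤ 1 / 2 ^ (k - 2) →
    ∀ ρ : ℝ, 1 < ρ → ukwC k w (ρ : ℂ) = 0 →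
      (∀ x : ℝ, x ∈ Set.Ioo (0 : ℝ) ρ → ukwC k w (x : ℂ) ≠ 0) →
    ∀ z : ℂ, ρ < ‖z‖ → ‖z‖ < 1 + (2 - δ) * Real.log k / k →
      ukwC k w z ≠ 0 := by
  have hlarge : ∀ᶠ k : ℕ in atTop, k ≠ 0 ∧ (k : ℝ) ^ 4 / 2 ^ k < 1 / 48 :=
    (eventually_ne_atTop 0).and <|
      (tendsto_pow_const_div_const_pow_of_one_lt 4 one_lt_two).eventually
        (gt_mem_nhds (by norm_num))
  obtain ⟨K, hK⟩ := eventually_atTop.mp hlarge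
  refine ⟨K, fun k hk w hw0 hw ρ hρ1 hρ _ z hρz hzR hz => ?_⟩
  obtain ⟨hk0, hsmall⟩ := hK k hk
  have hzR' : ‖z‖ ≤ 1 + 2 * Real.log k / k := by
    have : (2 - δ) * Real.log k / k ≤ 2 * Real.log k / k := by
      have := Real.log_natCast_nonneg k
      gcongr
      linarith
    linarith
  have hρnorm : ‖(ρ : ℂ)‖ = ρ := by rw [Complex.norm_real, Real.norm_of_nonneg (by linarith)]
  have hzρ : z = ρ := ukwC_zeros_subsingleton hk0 hsmall hw0 hw
    ⟨hz, mem_closedBall_zero_iff.mpr hzR'⟩ ⟨hρ, mem_closedBall_zero_iff.mpr (by linarith)⟩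
  rw [hzρ, hρnorm] at hρz
  exact lt_irrefl ρ hρz

/-- For every `0 < δ < 2` there is `K` such that for all `k ≥ K` and
`0 < w ≤ 1/2^(k-2)`: if `ρ̃ > 1` is real with `u_{k,w}(ρ̃) = 0` and `u_{k,w}` nonvanishing on
`(0, ρ̃)`, then `u_{k,w}` has no complex zero `z` with `ρ̃ < |z| < 1 + (2-δ) ln k / k`. -/
theorem stmt12 (δ : ℝ) (hδ0 : 0 < δ) (hδ2 : δ < 2) :
    ∃ K : ℕ, ∀ k : ℕ, K ≤ k → ∀ w : ℝ, 0 < w → w ≤ 1 / 2 ^ (k - 2) →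
    ∀ ρ : ℝ, 1 < ρ → ukwC k w (ρ : ℂ) = 0 →
      (∀ x : ℝ, x ∈ Set.Ioo (0 : ℝ) ρ → ukwC k w (x : ℂ) ≠ 0) →
    ∀ z : ℂ, ρ < ‖z‖ → ‖z‖ < 1 + (2 - δ) * Real.log k / k →
      ukwC k w z ≠ 0 :=
  stmt12_general δ hδ0
end

section
/- For every integer k ≥ 1, the sum of the weights w(t) = 1/∏_{s fringe subtree of t} |s| over all plane binary trees t of size k equals 1; equivalently, Σ_{t : |t| = k} ℓ(t) = k!, where ℓ(t) = k!·w(t) is the number of increasing labelings of t. -/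
deriving instance DecidableEq for PBTree

namespace PBTree

open Finset

lemma node_injective : Function.Injective fun p : PBTree × PBTree => node p.1 p.2 := by
  rintro ⟨l, r⟩ ⟨l', r'⟩ h
  cases h
  rfl

def treesOfSize : ℕ → Finset PBTree
  | 0 => {leaf}
  | k + 1 => (antidiagonal k).attach.biUnion fun p =>
      (treesOfSize p.1.1 ×ˢ treesOfSize p.1.2).image fun q => node q.1 q.2
decreasing_by
  all_goals have := HasAntidiagonal.mem_antidiagonal.mp p.2; omega

lemma mem_treesOfSize (t : PBTree) (k : ℕ) : t ∈ treesOfSize k ↔ t.size = k := by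
  induction t generalizing k with
  | leaf => cases k <;> simp [treesOfSize, size]
  | node l r ihl ihr =>
    cases k with
    | zero => simp [treesOfSize, size]
    | succ k =>
      simp only [treesOfSize, mem_biUnion, mem_attach, mem_image, mem_product, node.injEq,
        Prod.exists, true_and, Subtype.exists, HasAntidiagonal.mem_antidiagonal, size]
      constructor
      · rintro ⟨i, j, hij, _, _, ⟨hl, hr⟩, rfl, rfl⟩
        rw [ihl] at hl
        rw [ihr] at hr
        omega
      · intro h
        exact ⟨l.size, r.size, by omega, l, r, ⟨(ihl _).2 rfl, (ihr _).2 rfl⟩, rfl, rfl⟩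

lemma sum_treesOfSize_succ {M : Type*} [AddCommMonoid M] (f : PBTree → M) (k : ℕ) :
    ∑ t ∈ treesOfSize (k + 1), f t =
      ∑ p ∈ antidiagonal k, ∑ l ∈ treesOfSize p.1, ∑ r ∈ treesOfSize p.2, f (node l r) := by
  have hdisj : ((antidiagonal k).attach : Set _).PairwiseDisjoint fun p : antidiagonal k =>
      (treesOfSize p.1.1 ×ˢ treesOfSize p.1.2).image fun q => node q.1 q.2 := by
    rintro p - p' - hne
    simp only [Function.onFun, disjoint_left, mem_image, mem_product, not_exists, not_and]
    rintro _ ⟨⟨l, r⟩, ⟨hl, -⟩, rfl⟩ ⟨l', r'⟩ ⟨hl', -⟩ h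
    cases h
    rw [mem_treesOfSize] at hl hl'
    refine hne (Subtype.ext (Prod.ext (hl.symm.trans hl') ?_))
    have := HasAntidiagonal.mem_antidiagonal.mp p.2
    have := HasAntidiagonal.mem_antidiagonal.mp p'.2
    omega
  rw [treesOfSize, sum_biUnion hdisj,
    ← sum_attach (antidiagonal k) fun p => ∑ l ∈ treesOfSize p.1, ∑ r ∈ treesOfSize p.2, _]
  refine sum_congr rfl fun p _ => ?_
  rw [sum_image fun _ _ _ _ h => node_injective h, sum_product]

noncomputable def weight (t : PBTree) : ℝ := 1 / t.subtreeProd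

lemma weight_node (l r : PBTree) :
    weight (node l r) = weight l * weight r / (l.size + r.size + 1) := by
  simp only [weight, subtreeProd, size]
  push_cast
  field_simp

lemma sum_weight_treesOfSize (k : ℕ) : ∑ t ∈ treesOfSize k, weight t = 1 := by
  induction k using Nat.strong_induction_on with
  | _ k ih =>
    cases k with
    | zero => simp [treesOfSize, weight, subtreeProd]
    | succ k =>
      have hterm : ∀ p ∈ antidiagonal k,
          ∑ l ∈ treesOfSize p.1, ∑ r ∈ treesOfSize p.2, weight (node l r) = 1 / (k + 1) := by
        intro p hp
        have hk := HasAntidiagonal.mem_antidiagonal.mp hp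
        calc ∑ l ∈ treesOfSize p.1, ∑ r ∈ treesOfSize p.2, weight (node l r)
            = ∑ l ∈ treesOfSize p.1, ∑ r ∈ treesOfSize p.2, weight l * weight r / (k + 1) := by
              refine sum_congr rfl fun l hl => sum_congr rfl fun r hr => ?_
              rw [mem_treesOfSize] at hl hr
              rw [weight_node, hl, hr, ← hk]
              push_cast
              rfl
          _ = (∑ l ∈ treesOfSize p.1, weight l) * (∑ r ∈ treesOfSize p.2, weight r) / (k + 1) := by
              simp only [sum_mul_sum, sum_div]
          _ = 1 / (k + 1) := by
              rw [ih p.1 (by omega), ih p.2 (by omega), one_mul]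
      rw [sum_treesOfSize_succ, sum_congr rfl hterm, sum_const, Nat.card_antidiagonal,
        nsmul_eq_mul]
      push_cast
      field_simp

end PBTree

theorem stmt19_general (k : ℕ) :
    ∑' t : {t : PBTree // t.size = k}, (1 : ℝ) / ((t : PBTree).subtreeProd : ℝ) = 1 := by
  rw [← (Equiv.subtypeEquivRight fun t => PBTree.mem_treesOfSize t k).tsum_eq]
  exact (Finset.tsum_subtype (PBTree.treesOfSize k) PBTree.weight).trans
    (PBTree.sum_weight_treesOfSize k)

/-- For every `k ≥ 1`, the weights `w(t) = 1/∏_{s fringe subtree of t} |s|`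
of all plane binary trees of size `k` sum to `1`. -/
theorem stmt19 (k : ℕ) (hk : 1 ≤ k) :
    ∑' t : {t : PBTree // t.size = k}, (1 : ℝ) / ((t : PBTree).subtreeProd : ℝ) = 1 :=
  stmt19_general k
end
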